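/- Fix Δ ∈ ℝ and δ > 0, and define in ℝ⁴ the points p = (0,0,0,Δ+δ), u = (1,0,0,Δ), v = (1,1,0,Δ), w = (0,1,0,Δ), q = ((1+√2)/2, 1/2, δ², Δ+δ), and c_pvwq = (1/2, 1/2 + δ²(δ²+1), −1/2, Δ + δ/2 + δ(δ²+1)). Then ‖c_pvwq − p‖ = ‖c_pvwq − v‖ = ‖c_pvwq − w‖ = ‖c_pvwq − q‖, and moreover ‖c_pvwq − p‖ < ‖c_pvwq − u‖. -/

import Mathlib

noncomputable def pt (a b c d : ℝ) : EuclideanSpace ℝ (Fin 4) := !₂[a, b, c, d]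

noncomputable def cpvwq (Δ δ : ℝ) : EuclideanSpace ℝ (Fin 4) :=
  pt (1/2) (1/2 + δ^2 * (δ^2 + 1)) (-(1/2)) (Δ + δ/2 + δ * (δ^2 + 1))

theorem norm_pt_sub_pt (a b c d a' b' c' d' : ℝ) :
    ‖pt a b c d - pt a' b' c' d'‖ =
      √((a - a') ^ 2 + (b - b') ^ 2 + (c - c') ^ 2 + (d - d') ^ 2) := by
  simp [EuclideanSpace.norm_eq, Fin.sum_univ_four, pt, sq_abs]

/-- `c_pvwq` is equidistant from `p`, `v`, `w`, `q`, and strictly closer to them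
than to `u`. -/
theorem cpvwq_equidistant (Δ δ : ℝ) (hδ : 0 < δ) :
    ‖cpvwq Δ δ - pt 0 0 0 (Δ + δ)‖ = ‖cpvwq Δ δ - pt 1 1 0 Δ‖ ∧
    ‖cpvwq Δ δ - pt 1 1 0 Δ‖ = ‖cpvwq Δ δ - pt 0 1 0 Δ‖ ∧
    ‖cpvwq Δ δ - pt 0 1 0 Δ‖
      = ‖cpvwq Δ δ - pt ((1 + Real.sqrt 2)/2) (1/2) (δ^2) (Δ + δ)‖ ∧
    ‖cpvwq Δ δ - pt 0 0 0 (Δ + δ)‖ < ‖cpvwq Δ δ - pt 1 0 0 Δ‖ := by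
  simp only [cpvwq, norm_pt_sub_pt]
  refine ⟨by ring_nf, by ring_nf, ?_, ?_⟩
  · have hsqrt2 : √2 ^ 2 = 2 := Real.sq_sqrt zero_le_two
    congr 1
    linear_combination (-1/4 : ℝ) * hsqrt2
  · -- Only the last coordinates of `p` and `u` contribute differently: the squared gap is `2δ²(δ² + 1)`.
    have hgap : 0 < 2 * δ ^ 2 * (δ ^ 2 + 1) := by positivity
    exact Real.sqrt_lt_sqrt (by positivity) (by linear_combination hgap)
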